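/- arXiv:2212.08642 — 2 statements merged into one kernel-verified Lean document; each statement's English description precedes it below -/
import Mathlib

section
/- Let T = S ×₁Π₁ ×₂Π₂ ×₃Π₃ be a tensor mixed-membership blockmodel such that for every k: r_k ≤ ∏_{j≠k} r_j, M_k(S) has rank r_k, and every community of every mode has at least one pure node. Then rank M_k(T) = r_k for each k (T has Tucker rank (r₁,r₂,r₃)). Moreover, writing the compact SVD M_k(T) = U_kΛ_kV_kᵀ with U_k ∈ ℝ^{p_k×r_k}, and letting U_k^{pure} ∈ ℝ^{r_k×r_k} be the matrix whose l-th row is the row of U_k at a chosen pure node for community l: U_k^{pure} is invertible, U_k = Π_k U_k^{pure}, and U_k^{pure}(U_k^{pure})ᵀ = (Π_kᵀΠ_k)^{-1}. -/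
open Matrix
open scoped BigOperators Kronecker

noncomputable section

/-- A `p₁ × p₂ × p₃` real tensor. -/
abbrev Tensor3 (p₁ p₂ p₃ : ℕ) := Fin p₁ → Fin p₂ → Fin p₃ → ℝ

/-- Mode-1 matricization. -/
def mat1 {p₁ p₂ p₃ : ℕ} (T : Tensor3 p₁ p₂ p₃) : Matrix (Fin p₁) (Fin p₂ × Fin p₃) ℝ :=
  fun i jk => T i jk.1 jk.2

/-- Mode-2 matricization. -/
def mat2 {p₁ p₂ p₃ : ℕ} (T : Tensor3 p₁ p₂ p₃) : Matrix (Fin p₂) (Fin p₁ × Fin p₃) ℝ :=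
  fun j ik => T ik.1 j ik.2

/-- Mode-3 matricization. -/
def mat3 {p₁ p₂ p₃ : ℕ} (T : Tensor3 p₁ p₂ p₃) : Matrix (Fin p₃) (Fin p₁ × Fin p₂) ℝ :=
  fun k ij => T ij.1 ij.2 k

/-- Multilinear (Tucker) action `S ×₁ A ×₂ B ×₃ C`. -/
def tmul {r₁ r₂ r₃ p₁ p₂ p₃ : ℕ} (S : Tensor3 r₁ r₂ r₃)
    (A : Matrix (Fin p₁) (Fin r₁) ℝ) (B : Matrix (Fin p₂) (Fin r₂) ℝ)
    (C : Matrix (Fin p₃) (Fin r₃) ℝ) : Tensor3 p₁ p₂ p₃ :=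
  fun i j k => ∑ a, ∑ b, ∑ c, A i a * B j b * C k c * S a b c

/-- A membership matrix: nonnegative entries, rows summing to one. -/
def IsMembership {p r : ℕ} (P : Matrix (Fin p) (Fin r) ℝ) : Prop :=
  (∀ i l, 0 ≤ P i l) ∧ ∀ i, ∑ l, P i l = 1

/-- Index `i` is a pure node for community `l`. -/
def IsPureRow {p r : ℕ} (P : Matrix (Fin p) (Fin r) ℝ) (i : Fin p) (l : Fin r) : Prop :=
  ∀ l', P i l' = if l' = l then 1 else 0

/-- A permutation matrix. -/
def IsPermMatrix {r : ℕ} (P : Matrix (Fin r) (Fin r) ℝ) : Prop :=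
  ∃ e : Equiv.Perm (Fin r), ∀ i j, P i j = if j = e i then 1 else 0

/-- `M` has orthonormal columns. -/
def OrthoCols {m : Type*} {r : ℕ} [Fintype m] (U : Matrix m (Fin r) ℝ) : Prop :=
  Uᵀ * U = 1

/-- A compact SVD of a rank-`r` matrix. -/
def IsCompactSVD {m n : Type*} {r : ℕ} [Fintype m] [Fintype n]
    (M : Matrix m n ℝ) (U : Matrix m (Fin r) ℝ) (L : Matrix (Fin r) (Fin r) ℝ)
    (V : Matrix n (Fin r) ℝ) : Prop :=
  OrthoCols U ∧ OrthoCols V ∧ (∀ i j, i ≠ j → L i j = 0) ∧ (∀ i, 0 < L i i) ∧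
    M = U * L * Vᵀ

/-!
Choosing one pure node per community gives a left inverse of `Π`, so `Π₁`, `Π₂ ⊗ Π₃`, … are
injective and the matricizations `M_k(T) = Π_k M_k(S) (Π_i ⊗ Π_j)ᵀ` have the rank of `M_k(S)`.
In a compact SVD, `U = M V Λ⁻¹` lies in the column space of `Π`, i.e. `U = Π X`; the pure rows of
`U` read off `X` itself, and `Uᵀ U = 1` becomes `Xᵀ (Πᵀ Π) X = 1`, which forces `X` to be
invertible with `X Xᵀ = (Πᵀ Π)⁻¹`.
-/

section Matricization

variable {r₁ r₂ r₃ p₁ p₂ p₃ : ℕ} (S : Tensor3 r₁ r₂ r₃) (A : Matrix (Fin p₁) (Fin r₁) ℝ)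
  (B : Matrix (Fin p₂) (Fin r₂) ℝ) (C : Matrix (Fin p₃) (Fin r₃) ℝ)

lemma mat1_tmul : mat1 (tmul S A B C) = A * mat1 S * (B ⊗ₖ C)ᵀ := by
  ext i ⟨j, k⟩
  simp only [mat1, tmul, mul_apply, transpose_apply, kroneckerMap_apply,
    Fintype.sum_prod_type, Finset.sum_mul]
  rw [Finset.sum_comm]
  refine Finset.sum_congr rfl fun b _ => ?_
  rw [Finset.sum_comm]
  exact Finset.sum_congr rfl fun c _ => Finset.sum_congr rfl fun a _ => by ring

lemma mat2_tmul : mat2 (tmul S A B C) = B * mat2 S * (A ⊗ₖ C)ᵀ := by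
  ext j ⟨i, k⟩
  simp only [mat2, tmul, mul_apply, transpose_apply, kroneckerMap_apply,
    Fintype.sum_prod_type, Finset.sum_mul]
  refine Finset.sum_congr rfl fun a _ => ?_
  rw [Finset.sum_comm]
  exact Finset.sum_congr rfl fun c _ => Finset.sum_congr rfl fun b _ => by ring

lemma mat3_tmul : mat3 (tmul S A B C) = C * mat3 S * (A ⊗ₖ B)ᵀ := by
  ext k ⟨i, j⟩
  simp only [mat3, tmul, mul_apply, transpose_apply, kroneckerMap_apply,
    Fintype.sum_prod_type, Finset.sum_mul]
  exact Finset.sum_congr rfl fun a _ => Finset.sum_congr rfl fun b _ =>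
    Finset.sum_congr rfl fun c _ => by ring

end Matricization

lemma kronecker_mul_kronecker_eq_one {R : Type*} [CommSemiring R] {m n m' n' : Type*}
    [Fintype m] [Fintype m'] [DecidableEq n] [DecidableEq n'] {A : Matrix n m R}
    {B : Matrix m n R} {A' : Matrix n' m' R} {B' : Matrix m' n' R} (h : A * B = 1)
    (h' : A' * B' = 1) :
    (A ⊗ₖ A') * (B ⊗ₖ B') = 1 := by
  rw [← mul_kronecker_mul, h, h', one_kronecker_one]

section Rank

variable {R : Type*} [CommRing R] [StrongRankCondition R]
  {m n o : Type*} [Fintype n] [Fintype o] [DecidableEq n]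

lemma rank_mul_eq_right_of_mul_eq_one [Fintype m] {A : Matrix m n R} {B : Matrix n m R}
    (hBA : B * A = 1) (M : Matrix n o R) : (A * M).rank = M.rank := by
  refine le_antisymm (rank_mul_le_right A M) ?_
  calc M.rank = (B * (A * M)).rank := by rw [← Matrix.mul_assoc, hBA, Matrix.one_mul]
    _ ≤ (A * M).rank := rank_mul_le_right B (A * M)

lemma rank_mul_eq_left_of_mul_eq_one {A : Matrix n o R} {B : Matrix o n R} (hAB : A * B = 1)
    (M : Matrix m n R) : (M * A).rank = M.rank := by
  refine le_antisymm (rank_mul_le_left M A) ?_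
  calc M.rank = (M * A * B).rank := by rw [Matrix.mul_assoc, hAB, Matrix.mul_one]
    _ ≤ (M * A).rank := rank_mul_le_left (M * A) B

end Rank

lemma mul_transpose_eq_inv_of_transpose_mul_mul_eq_one {R : Type*} [CommRing R] {n : Type*}
    [Fintype n] [DecidableEq n] {G X : Matrix n n R} (h : Xᵀ * G * X = 1) : X * Xᵀ = G⁻¹ := by
  have hGX : G * X * Xᵀ = 1 := mul_eq_one_comm.mp (by rw [← Matrix.mul_assoc, h])
  rw [Matrix.mul_assoc] at hGX
  exact (inv_eq_right_inv hGX).symm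

section Pure

variable {p r : ℕ} {P : Matrix (Fin p) (Fin r) ℝ}

lemma submatrix_eq_one_of_isPureRow {f : Fin r → Fin p} (hf : ∀ l, IsPureRow P (f l) l) :
    P.submatrix f id = 1 := by
  ext l l'
  rw [submatrix_apply, id, hf l l', one_apply]
  exact if_congr eq_comm rfl rfl

lemma mul_submatrix_eq_of_isPureRow {n : Type*} {f : Fin r → Fin p}
    (hf : ∀ l, IsPureRow P (f l) l) (X : Matrix (Fin r) n ℝ) :
    (P * X).submatrix f id = X := by
  rw [submatrix_mul P X f id id Function.bijective_id, submatrix_eq_one_of_isPureRow hf,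
    Matrix.one_mul, submatrix_id_id]

lemma exists_mul_eq_one_of_isPureRow (hp : ∀ l, ∃ i, IsPureRow P i l) :
    ∃ Q : Matrix (Fin r) (Fin p) ℝ, Q * P = 1 := by
  choose f hf using hp
  refine ⟨(1 : Matrix (Fin p) (Fin p) ℝ).submatrix f id, ?_⟩
  rw [← submatrix_id_id P, ← submatrix_mul 1 P f id id Function.bijective_id, Matrix.one_mul]
  exact submatrix_eq_one_of_isPureRow hf

end Pure

namespace IsCompactSVD

variable {m n : Type*} [Fintype m] [Fintype n] {r : ℕ} {M : Matrix m n ℝ}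
  {U : Matrix m (Fin r) ℝ} {L : Matrix (Fin r) (Fin r) ℝ} {V : Matrix n (Fin r) ℝ}

lemma isUnit_det (h : IsCompactSVD M U L V) : IsUnit L.det := by
  obtain ⟨-, -, hoff, hpos, -⟩ := h
  have hdiag : L = diagonal fun i => L i i := by
    ext i j
    by_cases hij : i = j
    · simp [hij]
    · simp [hij, hoff i j hij]
  rw [hdiag, det_diagonal]
  exact (Finset.prod_pos fun i _ => hpos i).ne'.isUnit

lemma left_eq_mul (h : IsCompactSVD M U L V) : U = M * (V * L⁻¹) := by
  have hL := h.isUnit_det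
  obtain ⟨-, hV, -, -, hM⟩ := h
  rw [hM, Matrix.mul_assoc, Matrix.mul_assoc, ← Matrix.mul_assoc Vᵀ, hV, Matrix.one_mul,
    mul_nonsing_inv _ hL, Matrix.mul_one]

lemma simplex_of_isPureRow {p : ℕ} {P : Matrix (Fin p) (Fin r) ℝ} {Y : Matrix (Fin r) n ℝ}
    {U : Matrix (Fin p) (Fin r) ℝ} (h : IsCompactSVD (P * Y) U L V) {f : Fin r → Fin p}
    (hf : ∀ l, IsPureRow P (f l) l) :
    IsUnit (U.submatrix f id).det ∧ U = P * U.submatrix f id ∧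
      U.submatrix f id * (U.submatrix f id)ᵀ = (Pᵀ * P)⁻¹ := by
  obtain ⟨X, hU⟩ : ∃ X, U = P * X := ⟨Y * (V * L⁻¹), by rw [h.left_eq_mul, Matrix.mul_assoc]⟩
  have hpure : U.submatrix f id = X := by rw [hU]; exact mul_submatrix_eq_of_isPureRow hf X
  have hgram : Xᵀ * (Pᵀ * P) * X = 1 := by
    rw [← h.1, hU, transpose_mul]; simp only [Matrix.mul_assoc]
  rw [hpure]
  exact ⟨isUnit_det_of_left_inverse hgram, hU,
    mul_transpose_eq_inv_of_transpose_mul_mul_eq_one hgram⟩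

end IsCompactSVD

lemma blockmodel_matricization {p r : ℕ} {q s : Type*} [Fintype q] [Fintype s] [DecidableEq s]
    {P : Matrix (Fin p) (Fin r) ℝ} {Y : Matrix (Fin r) s ℝ}
    {K : Matrix q s ℝ} {Q : Matrix s q ℝ} (hp : ∀ l, ∃ i, IsPureRow P i l) (hK : Q * K = 1)
    (hY : Y.rank = r) :
    (P * Y * Kᵀ).rank = r ∧
    ∀ (U : Matrix (Fin p) (Fin r) ℝ) (L : Matrix (Fin r) (Fin r) ℝ) (V : Matrix q (Fin r) ℝ),
      IsCompactSVD (P * Y * Kᵀ) U L V →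
      ∀ f : Fin r → Fin p, (∀ l, IsPureRow P (f l) l) →
        IsUnit (U.submatrix f id).det ∧ U = P * U.submatrix f id ∧
          U.submatrix f id * (U.submatrix f id)ᵀ = (Pᵀ * P)⁻¹ := by
  obtain ⟨QP, hQP⟩ := exists_mul_eq_one_of_isPureRow hp
  have hKQ : Kᵀ * Qᵀ = 1 := by rw [← transpose_mul, hK, transpose_one]
  refine ⟨?_, fun U L V h f hf => ?_⟩
  · rw [rank_mul_eq_left_of_mul_eq_one hKQ, rank_mul_eq_right_of_mul_eq_one hQP, hY]
  · rw [Matrix.mul_assoc] at h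
    exact h.simplex_of_isPureRow hf

theorem stmt2_general {p₁ p₂ p₃ r₁ r₂ r₃ : ℕ}
    (S : Tensor3 r₁ r₂ r₃)
    (P1 : Matrix (Fin p₁) (Fin r₁) ℝ) (P2 : Matrix (Fin p₂) (Fin r₂) ℝ)
    (P3 : Matrix (Fin p₃) (Fin r₃) ℝ)
    (hS1 : (mat1 S).rank = r₁) (hS2 : (mat2 S).rank = r₂) (hS3 : (mat3 S).rank = r₃)
    (hp1 : ∀ l, ∃ i, IsPureRow P1 i l) (hp2 : ∀ l, ∃ i, IsPureRow P2 i l)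
    (hp3 : ∀ l, ∃ i, IsPureRow P3 i l)
    (T : Tensor3 p₁ p₂ p₃) (hT : T = tmul S P1 P2 P3) :
    ((mat1 T).rank = r₁ ∧ (mat2 T).rank = r₂ ∧ (mat3 T).rank = r₃) ∧
    (∀ (U : Matrix (Fin p₁) (Fin r₁) ℝ) (L : Matrix (Fin r₁) (Fin r₁) ℝ)
        (V : Matrix (Fin p₂ × Fin p₃) (Fin r₁) ℝ),
      IsCompactSVD (mat1 T) U L V →
      ∀ f : Fin r₁ → Fin p₁, (∀ l, IsPureRow P1 (f l) l) →
        IsUnit (Matrix.of (fun l a => U (f l) a) : Matrix (Fin r₁) (Fin r₁) ℝ).det ∧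
        U = P1 * Matrix.of (fun l a => U (f l) a) ∧
        (Matrix.of (fun l a => U (f l) a) : Matrix (Fin r₁) (Fin r₁) ℝ) *
            (Matrix.of (fun l a => U (f l) a) : Matrix (Fin r₁) (Fin r₁) ℝ)ᵀ
          = (P1ᵀ * P1)⁻¹) ∧
    (∀ (U : Matrix (Fin p₂) (Fin r₂) ℝ) (L : Matrix (Fin r₂) (Fin r₂) ℝ)
        (V : Matrix (Fin p₁ × Fin p₃) (Fin r₂) ℝ),
      IsCompactSVD (mat2 T) U L V →
      ∀ f : Fin r₂ → Fin p₂, (∀ l, IsPureRow P2 (f l) l) →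
        IsUnit (Matrix.of (fun l a => U (f l) a) : Matrix (Fin r₂) (Fin r₂) ℝ).det ∧
        U = P2 * Matrix.of (fun l a => U (f l) a) ∧
        (Matrix.of (fun l a => U (f l) a) : Matrix (Fin r₂) (Fin r₂) ℝ) *
            (Matrix.of (fun l a => U (f l) a) : Matrix (Fin r₂) (Fin r₂) ℝ)ᵀ
          = (P2ᵀ * P2)⁻¹) ∧
    (∀ (U : Matrix (Fin p₃) (Fin r₃) ℝ) (L : Matrix (Fin r₃) (Fin r₃) ℝ)
        (V : Matrix (Fin p₁ × Fin p₂) (Fin r₃) ℝ),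
      IsCompactSVD (mat3 T) U L V →
      ∀ f : Fin r₃ → Fin p₃, (∀ l, IsPureRow P3 (f l) l) →
        IsUnit (Matrix.of (fun l a => U (f l) a) : Matrix (Fin r₃) (Fin r₃) ℝ).det ∧
        U = P3 * Matrix.of (fun l a => U (f l) a) ∧
        (Matrix.of (fun l a => U (f l) a) : Matrix (Fin r₃) (Fin r₃) ℝ) *
            (Matrix.of (fun l a => U (f l) a) : Matrix (Fin r₃) (Fin r₃) ℝ)ᵀ
          = (P3ᵀ * P3)⁻¹) := by
  subst hT
  obtain ⟨Q1, hQ1⟩ := exists_mul_eq_one_of_isPureRow hp1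
  obtain ⟨Q2, hQ2⟩ := exists_mul_eq_one_of_isPureRow hp2
  obtain ⟨Q3, hQ3⟩ := exists_mul_eq_one_of_isPureRow hp3
  obtain ⟨rank1, svd1⟩ :=
    blockmodel_matricization hp1 (kronecker_mul_kronecker_eq_one hQ2 hQ3) hS1
  obtain ⟨rank2, svd2⟩ :=
    blockmodel_matricization hp2 (kronecker_mul_kronecker_eq_one hQ1 hQ3) hS2
  obtain ⟨rank3, svd3⟩ :=
    blockmodel_matricization hp3 (kronecker_mul_kronecker_eq_one hQ1 hQ2) hS3
  rw [mat1_tmul, mat2_tmul, mat3_tmul]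
  exact ⟨⟨rank1, rank2, rank3⟩, svd1, svd2, svd3⟩

/-- a tensor mixed-membership blockmodel has Tucker rank `(r₁,r₂,r₃)` and
its singular vectors form a simplex with vertices the pure-node rows. -/
theorem stmt2 {p₁ p₂ p₃ r₁ r₂ r₃ : ℕ}
    (S : Tensor3 r₁ r₂ r₃)
    (P1 : Matrix (Fin p₁) (Fin r₁) ℝ) (P2 : Matrix (Fin p₂) (Fin r₂) ℝ)
    (P3 : Matrix (Fin p₃) (Fin r₃) ℝ)
    (hm1 : IsMembership P1) (hm2 : IsMembership P2) (hm3 : IsMembership P3)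
    (hr1 : r₁ ≤ r₂ * r₃) (hr2 : r₂ ≤ r₁ * r₃) (hr3 : r₃ ≤ r₁ * r₂)
    (hS1 : (mat1 S).rank = r₁) (hS2 : (mat2 S).rank = r₂) (hS3 : (mat3 S).rank = r₃)
    (hp1 : ∀ l, ∃ i, IsPureRow P1 i l) (hp2 : ∀ l, ∃ i, IsPureRow P2 i l)
    (hp3 : ∀ l, ∃ i, IsPureRow P3 i l)
    (T : Tensor3 p₁ p₂ p₃) (hT : T = tmul S P1 P2 P3) :
    ((mat1 T).rank = r₁ ∧ (mat2 T).rank = r₂ ∧ (mat3 T).rank = r₃) ∧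
    (∀ (U : Matrix (Fin p₁) (Fin r₁) ℝ) (L : Matrix (Fin r₁) (Fin r₁) ℝ)
        (V : Matrix (Fin p₂ × Fin p₃) (Fin r₁) ℝ),
      IsCompactSVD (mat1 T) U L V →
      ∀ f : Fin r₁ → Fin p₁, (∀ l, IsPureRow P1 (f l) l) →
        IsUnit (Matrix.of (fun l a => U (f l) a) : Matrix (Fin r₁) (Fin r₁) ℝ).det ∧
        U = P1 * Matrix.of (fun l a => U (f l) a) ∧
        (Matrix.of (fun l a => U (f l) a) : Matrix (Fin r₁) (Fin r₁) ℝ) *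
            (Matrix.of (fun l a => U (f l) a) : Matrix (Fin r₁) (Fin r₁) ℝ)ᵀ
          = (P1ᵀ * P1)⁻¹) ∧
    (∀ (U : Matrix (Fin p₂) (Fin r₂) ℝ) (L : Matrix (Fin r₂) (Fin r₂) ℝ)
        (V : Matrix (Fin p₁ × Fin p₃) (Fin r₂) ℝ),
      IsCompactSVD (mat2 T) U L V →
      ∀ f : Fin r₂ → Fin p₂, (∀ l, IsPureRow P2 (f l) l) →
        IsUnit (Matrix.of (fun l a => U (f l) a) : Matrix (Fin r₂) (Fin r₂) ℝ).det ∧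
        U = P2 * Matrix.of (fun l a => U (f l) a) ∧
        (Matrix.of (fun l a => U (f l) a) : Matrix (Fin r₂) (Fin r₂) ℝ) *
            (Matrix.of (fun l a => U (f l) a) : Matrix (Fin r₂) (Fin r₂) ℝ)ᵀ
          = (P2ᵀ * P2)⁻¹) ∧
    (∀ (U : Matrix (Fin p₃) (Fin r₃) ℝ) (L : Matrix (Fin r₃) (Fin r₃) ℝ)
        (V : Matrix (Fin p₁ × Fin p₂) (Fin r₃) ℝ),
      IsCompactSVD (mat3 T) U L V →
      ∀ f : Fin r₃ → Fin p₃, (∀ l, IsPureRow P3 (f l) l) →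
        IsUnit (Matrix.of (fun l a => U (f l) a) : Matrix (Fin r₃) (Fin r₃) ℝ).det ∧
        U = P3 * Matrix.of (fun l a => U (f l) a) ∧
        (Matrix.of (fun l a => U (f l) a) : Matrix (Fin r₃) (Fin r₃) ℝ) *
            (Matrix.of (fun l a => U (f l) a) : Matrix (Fin r₃) (Fin r₃) ℝ)ᵀ
          = (P3ᵀ * P3)⁻¹) :=
  stmt2_general S P1 P2 P3 hS1 hS2 hS3 hp1 hp2 hp3 T hT
end
end

section
/- Deterministic bound for the linear term. In the setting of the deterministic perturbation framework, additionally let κ > 0 satisfy σ₁(T₁) ≤ κ·λ, let Û₁ ∈ ℝ^{p₁×r₁} have orthonormal columns, let Λ̂ be an invertible r₁×r₁ matrix with smallest singular value at least λ/2, fix m ∈ {1,…,p₁}, and set ξ̃ := ‖e_mᵀ Z₁ P̃ V₁‖₂ and L := (I − U₁U₁ᵀ)·Z₁·P̂·T₁ᵀ·Û₁·Λ̂^{-2}. Then ‖e_mᵀ L‖₂ ≤ (8κ/λ)·‖U₁‖_{2,∞}·(τ₁·η + ‖U₁ᵀZ₁V₁‖) + (8κ/λ)·τ₁·η̃ + (4κ/λ)·ξ̃.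 -/
open Matrix
open scoped BigOperators Kronecker

noncomputable section

/-- Euclidean norm of a finitely-indexed real vector. -/
def enorm2 {n : Type*} [Fintype n] (v : n → ℝ) : ℝ := Real.sqrt (∑ i, (v i) ^ 2)

/-- `‖M‖_{2,∞}`: largest Euclidean norm of a row of `M`. -/
def twoInf {m n : Type*} [Fintype m] [Fintype n] (M : Matrix m n ℝ) : ℝ :=
  sSup {c | ∃ i, c = enorm2 (M i)}

/-- Spectral norm of a matrix. -/
def spec {m n : Type*} [Fintype m] [Fintype n] (M : Matrix m n ℝ) : ℝ :=
  sSup {c | ∃ v : n → ℝ, enorm2 v ≤ 1 ∧ c = enorm2 (M.mulVec v)}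

/-- `j`-th largest singular value (for `j ≥ 1`), via the Courant–Fischer principle. -/
def sval {m n : Type*} [Fintype m] [Fintype n] (M : Matrix m n ℝ) (j : ℕ) : ℝ :=
  sSup {c | 0 ≤ c ∧ ∃ V : Submodule ℝ (n → ℝ), Module.finrank ℝ V = j ∧
      ∀ v ∈ V, c * enorm2 v ≤ enorm2 (M.mulVec v)}

/-- An orthogonal projection matrix. -/
def IsOrthProj {n : Type*} [Fintype n] (P : Matrix n n ℝ) : Prop :=
  Pᵀ = P ∧ P * P = P

/-- `τ₁`: the largest spectral norm of `Z` compressed by a Kronecker product of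
orthogonal projections of ranks at most `2r₂` and `2r₃`. -/
def tauP {p₁ p₂ p₃ : ℕ} (r₂ r₃ : ℕ) (Z : Matrix (Fin p₁) (Fin p₂ × Fin p₃) ℝ) : ℝ :=
  sSup {c | ∃ (P : Matrix (Fin p₂) (Fin p₂) ℝ) (Q : Matrix (Fin p₃) (Fin p₃) ℝ),
    IsOrthProj P ∧ IsOrthProj Q ∧ P.rank ≤ 2 * r₂ ∧ Q.rank ≤ 2 * r₃ ∧
    c = spec (Z * (P ⊗ₖ Q))}

/-- `‖sinΘ(U,V)‖ = ‖(I − UUᵀ)V‖`. -/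
def sinTheta {m : Type*} {r s : ℕ} [Fintype m] [DecidableEq m]
    (U : Matrix m (Fin r) ℝ) (V : Matrix m (Fin s) ℝ) : ℝ :=
  spec ((1 - U * Uᵀ) * V)

/-- `Z'` is obtained from `Z` by setting a subset of its rows to zero. -/
def ZeroRows {m n : Type*} (Z Z' : Matrix m n ℝ) : Prop :=
  ∃ s : Set m, ∀ i, (i ∈ s ∧ ∀ j, Z' i j = 0) ∨ (i ∉ s ∧ ∀ j, Z' i j = Z i j)

/-- `Z'` is obtained from `Z` by setting a subset of its columns to zero. -/
def ZeroCols {m n : Type*} (Z Z' : Matrix m n ℝ) : Prop :=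
  ∃ s : Set n, ∀ j, (j ∈ s ∧ ∀ i, Z' i j = 0) ∨ (j ∉ s ∧ ∀ i, Z' i j = Z i j)

/-- Columns of `U` are orthonormal eigenvectors of the symmetric matrix `A` associated
with its `r` largest eigenvalues (with multiplicity). -/
def IsTopEigvecs {n : Type*} {r : ℕ} [Fintype n] (A : Matrix n n ℝ)
    (U : Matrix n (Fin r) ℝ) : Prop :=
  OrthoCols U ∧ ∃ D : Fin r → ℝ, A * U = U * Matrix.diagonal D ∧
    ∀ (v : n → ℝ) (c : ℝ), v ≠ 0 → A.mulVec v = c • v → Uᵀ.mulVec v = 0 → ∀ j, c ≤ D j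

/-- `U` is a matrix of top-`r` left singular vectors of `M`. -/
def IsTopLeftSingular {m q : Type*} {r : ℕ} [Fintype m] [Fintype q]
    (M : Matrix m q ℝ) (U : Matrix m (Fin r) ℝ) : Prop :=
  IsTopEigvecs (M * Mᵀ) U

/-!
Write `T₁ᵀ = V₁ L₁ᵀ U₁ᵀ`, so that the linear term factors as `(I - U₁U₁ᵀ) Z₁ P̂ V₁ · B` with
`‖B‖ ≤ ‖L₁‖ ‖Λ̂⁻¹‖² ≤ κλ (2/λ)² = 4κ/λ`. Row `m` of `(I - U₁U₁ᵀ) G`, `G = Z₁ P̂ V₁`, is at most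
`‖e_mᵀ G‖ + ‖U₁‖_{2,∞} ‖U₁ᵀ G‖`. Both terms are handled by replacing `P̂` by `P̃` (resp. by
`P_{U₂} ⊗ P_{U₃}`, which fixes `V₁`): the key estimate is
`‖Z₁ (P_{A₂} ⊗ P_{A₃} - P_{B₂} ⊗ P_{B₃})‖ ≤ 2τ₁ (‖sinΘ(B₂,A₂)‖ + ‖sinΘ(B₃,A₃)‖)`.
It follows by splitting the difference as `(P_{A₂} - P_{B₂}) ⊗ P_{A₃} + P_{B₂} ⊗ (P_{A₃} - P_{B₃})`:
each factor `P_A - P_B` is fixed by the projection onto `span(A, B)`, of rank at most `2r`, so `Z₁`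
may be compressed there at cost `τ₁`, and `‖P_A - P_B‖ ≤ 2‖sinΘ(B,A)‖` because, for subspaces
of equal dimension, `‖(I - P_A)B‖ = ‖(I - P_B)A‖`.
-/

open scoped Matrix.Norms.L2Operator

section VectorNorm

variable {n : Type*} [Fintype n]

lemma enorm2_eq_norm (v : n → ℝ) : enorm2 v = ‖WithLp.toLp 2 v‖ := by
  simp [enorm2, EuclideanSpace.norm_eq, sq_abs]

lemma enorm2_zero : enorm2 (0 : n → ℝ) = 0 := by simp [enorm2]

lemma enorm2_nonneg (v : n → ℝ) : 0 ≤ enorm2 v := Real.sqrt_nonneg _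

lemma sq_enorm2 (v : n → ℝ) : enorm2 v ^ 2 = ∑ i, v i ^ 2 :=
  Real.sq_sqrt (by positivity)

lemma sq_enorm2_eq_dotProduct (v : n → ℝ) : enorm2 v ^ 2 = v ⬝ᵥ v := by
  rw [sq_enorm2, dotProduct]
  simp only [sq]

lemma enorm2_add_le (v w : n → ℝ) : enorm2 (v + w) ≤ enorm2 v + enorm2 w := by
  simpa only [enorm2_eq_norm, WithLp.toLp_add] using norm_add_le _ _

lemma enorm2_sub_le (v w : n → ℝ) : enorm2 (v - w) ≤ enorm2 v + enorm2 w := by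
  simpa only [enorm2_eq_norm, WithLp.toLp_sub] using norm_sub_le _ _

lemma enorm2_smul (c : ℝ) (v : n → ℝ) : enorm2 (c • v) = |c| * enorm2 v := by
  simp only [enorm2_eq_norm, WithLp.toLp_smul, norm_smul, Real.norm_eq_abs]

lemma enorm2_pos {v : n → ℝ} (hv : v ≠ 0) : 0 < enorm2 v := by
  rw [enorm2_eq_norm, norm_pos_iff]
  exact fun h => hv (congrArg WithLp.ofLp h)

lemma enorm2_single [DecidableEq n] (i : n) : enorm2 (Pi.single i (1 : ℝ)) = 1 := by
  simp [enorm2, Pi.single_apply]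

lemma enorm2_sq_mulVec {m : Type*} [Fintype m] (N : Matrix m n ℝ) (x : n → ℝ) :
    enorm2 (N *ᵥ x) ^ 2 = x ⬝ᵥ ((Nᵀ * N) *ᵥ x) := by
  rw [sq_enorm2_eq_dotProduct, ← Matrix.mulVec_mulVec, Matrix.dotProduct_mulVec x,
    Matrix.vecMul_transpose]

end VectorNorm

section OperatorNorm

variable {m n p : Type*}

lemma spec_eq_l2_opNorm [Fintype m] [Fintype n] [DecidableEq n] (M : Matrix m n ℝ) :
    spec M = ‖M‖ := by
  rw [Matrix.l2_opNorm_def, ← ContinuousLinearMap.sSup_unitClosedBall_eq_norm]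
  unfold spec
  congr 1
  ext c
  simp only [Set.mem_ofPred_eq, Set.mem_image, Metric.mem_closedBall, dist_zero_right,
    enorm2_eq_norm]
  constructor
  · rintro ⟨v, hv, rfl⟩
    exact ⟨WithLp.toLp 2 v, hv, rfl⟩
  · rintro ⟨x, hx, rfl⟩
    exact ⟨x.ofLp, hx, rfl⟩

lemma enorm2_mulVec_le [Fintype m] [Fintype n] [DecidableEq n] (M : Matrix m n ℝ) (v : n → ℝ) :
    enorm2 (M *ᵥ v) ≤ ‖M‖ * enorm2 v := by
  rw [enorm2_eq_norm, enorm2_eq_norm]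
  exact M.l2_opNorm_mulVec (WithLp.toLp 2 v)

lemma l2_opNorm_le_of_forall_enorm2_le [Fintype m] [Fintype n] [DecidableEq n] (M : Matrix m n ℝ)
    {C : ℝ} (hC : 0 ≤ C) (h : ∀ v, enorm2 (M *ᵥ v) ≤ C * enorm2 v) : ‖M‖ ≤ C := by
  rw [Matrix.l2_opNorm_def]
  refine ContinuousLinearMap.opNorm_le_bound _ hC fun x => ?_
  have hx := h x.ofLp
  rw [enorm2_eq_norm, enorm2_eq_norm] at hx
  exact hx

lemma l2_opNorm_transpose [Fintype m] [Fintype n] [DecidableEq m] [DecidableEq n]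
    (M : Matrix m n ℝ) : ‖Mᵀ‖ = ‖M‖ := by
  rw [← Matrix.conjTranspose_eq_transpose_of_trivial, Matrix.l2_opNorm_conjTranspose]

lemma enorm2_row_mul_le [Fintype n] [Fintype p] [DecidableEq n] [DecidableEq p]
    (A : Matrix m n ℝ) (B : Matrix n p ℝ) (i : m) : enorm2 ((A * B) i) ≤ enorm2 (A i) * ‖B‖ := by
  have hrow : (A * B) i = Bᵀ *ᵥ A i := by
    rw [Matrix.mulVec_transpose]
    rfl
  rw [hrow, mul_comm, ← l2_opNorm_transpose B]
  exact enorm2_mulVec_le _ _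

lemma enorm2_row_le_l2_opNorm [Fintype m] [Fintype n] [DecidableEq m] [DecidableEq n]
    (M : Matrix m n ℝ) (i : m) : enorm2 (M i) ≤ ‖M‖ := by
  have hone : (1 : Matrix m m ℝ) i = Pi.single i 1 := funext fun j => Matrix.one_eq_pi_single
  simpa [hone, enorm2_single] using enorm2_row_mul_le 1 M i

lemma enorm2_row_le_add_l2_opNorm_sub [Fintype m] [Fintype n] [DecidableEq m] [DecidableEq n]
    (A B : Matrix m n ℝ) (i : m) : enorm2 (A i) ≤ enorm2 (B i) + ‖A - B‖ := by
  have hA : A i = B i + (A - B) i := by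
    funext j
    simp
  rw [hA]
  exact (enorm2_add_le _ _).trans (add_le_add le_rfl (enorm2_row_le_l2_opNorm _ i))

lemma l2_opNorm_mul_le_add_l2_opNorm_sub [Fintype m] [Fintype n] [Fintype p] [DecidableEq n]
    [DecidableEq p] {X : Matrix m n ℝ} (hX : ‖X‖ ≤ 1) (A B : Matrix n p ℝ) :
    ‖X * A‖ ≤ ‖X * B‖ + ‖A - B‖ := by
  have hA : X * A = X * B + X * (A - B) := by rw [Matrix.mul_sub]; abel
  rw [hA]
  refine (norm_add_le _ _).trans (add_le_add le_rfl ?_)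
  calc ‖X * (A - B)‖ ≤ ‖X‖ * ‖A - B‖ := Matrix.l2_opNorm_mul _ _
    _ ≤ 1 * ‖A - B‖ := by gcongr
    _ = ‖A - B‖ := one_mul _

lemma l2_opNorm_mul_mul_le_of_le_one {q : Type*} [Fintype m] [Fintype n] [Fintype p]
    [Fintype q] [DecidableEq n] [DecidableEq p] [DecidableEq q] {X : Matrix m n ℝ}
    {M : Matrix n p ℝ} {Y : Matrix p q ℝ} (hX : ‖X‖ ≤ 1) (hY : ‖Y‖ ≤ 1) : ‖X * M * Y‖ ≤ ‖M‖ :=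
  calc ‖X * M * Y‖ ≤ ‖X‖ * ‖M‖ * ‖Y‖ := (Matrix.l2_opNorm_mul _ _).trans
        (mul_le_mul_of_nonneg_right (Matrix.l2_opNorm_mul _ _) (norm_nonneg _))
    _ ≤ 1 * ‖M‖ * 1 := by gcongr
    _ = ‖M‖ := by ring

lemma enorm2_row_le_twoInf [Fintype m] [Fintype n] (M : Matrix m n ℝ) (i : m) :
    enorm2 (M i) ≤ twoInf M :=
  le_csSup ((Set.finite_range fun i => enorm2 (M i)).subset
    fun _ ⟨j, hj⟩ => ⟨j, hj.symm⟩ : {c | ∃ i, c = enorm2 (M i)}.Finite).bddAbove ⟨i, rfl⟩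

lemma l2_opNorm_le_one_of_transpose_mul_self [Fintype n] [DecidableEq n] {P : Matrix n n ℝ}
    (hP : Pᵀ * P = P) : ‖P‖ ≤ 1 := by
  have h := Matrix.l2_opNorm_conjTranspose_mul_self P
  rw [Matrix.conjTranspose_eq_transpose_of_trivial, hP] at h
  nlinarith [norm_nonneg P]

lemma OrthoCols.l2_opNorm_le_one [Fintype m] {r : ℕ} {U : Matrix m (Fin r) ℝ}
    (hU : OrthoCols U) : ‖U‖ ≤ 1 := by
  have h := Matrix.l2_opNorm_conjTranspose_mul_self U
  rw [Matrix.conjTranspose_eq_transpose_of_trivial, hU] at h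
  have h1 : ‖(1 : Matrix (Fin r) (Fin r) ℝ)‖ ≤ 1 :=
    l2_opNorm_le_one_of_transpose_mul_self (by simp)
  nlinarith [norm_nonneg U]

lemma OrthoCols.l2_opNorm_transpose_le_one [Fintype m] [DecidableEq m] {r : ℕ}
    {U : Matrix m (Fin r) ℝ} (hU : OrthoCols U) : ‖Uᵀ‖ ≤ 1 := by
  rw [l2_opNorm_transpose]
  exact hU.l2_opNorm_le_one

lemma IsOrthProj.l2_opNorm_le_one [Fintype n] [DecidableEq n] {P : Matrix n n ℝ}
    (hP : IsOrthProj P) : ‖P‖ ≤ 1 :=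
  l2_opNorm_le_one_of_transpose_mul_self (by rw [hP.1, hP.2])

lemma OrthoCols.isOrthProj [Fintype m] {r : ℕ} {U : Matrix m (Fin r) ℝ} (hU : OrthoCols U) :
    IsOrthProj (U * Uᵀ) :=
  ⟨by rw [Matrix.transpose_mul, Matrix.transpose_transpose],
    by rw [Matrix.mul_assoc, ← Matrix.mul_assoc Uᵀ, hU, Matrix.one_mul]⟩

lemma IsOrthProj.one_sub [Fintype m] [DecidableEq m] {P : Matrix m m ℝ} (hP : IsOrthProj P) :
    IsOrthProj (1 - P) :=
  ⟨by rw [Matrix.transpose_sub, Matrix.transpose_one, hP.1],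
    by rw [Matrix.sub_mul, Matrix.mul_sub, Matrix.mul_sub, hP.2]; simp⟩

lemma rank_mul_transpose_le [Fintype m] {r : ℕ} (U : Matrix m (Fin r) ℝ) : (U * Uᵀ).rank ≤ r :=
  (Matrix.rank_mul_le_left U Uᵀ).trans ((Matrix.rank_le_card_width U).trans_eq (Fintype.card_fin r))

end OperatorNorm

section Kronecker

variable {m n p q : Type*} [Fintype p] [Fintype q]

lemma sum_sq_mul_le [Fintype m] [Fintype n] [DecidableEq n] (A : Matrix m n ℝ) (X : Matrix n q ℝ) :
    ∑ i, ∑ j, (A * X) i j ^ 2 ≤ ‖A‖ ^ 2 * ∑ i, ∑ j, X i j ^ 2 := by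
  rw [Finset.sum_comm, Finset.sum_comm (f := fun i j => X i j ^ 2), Finset.mul_sum]
  refine Finset.sum_le_sum fun j _ => ?_
  have h := pow_le_pow_left₀ (enorm2_nonneg _) (enorm2_mulVec_le A (Xᵀ j)) 2
  rw [mul_pow, sq_enorm2, sq_enorm2] at h
  simpa [Matrix.mulVec, dotProduct, Matrix.mul_apply] using h

lemma kronecker_mulVec_apply (A : Matrix m p ℝ) (B : Matrix n q ℝ) (v : p × q → ℝ) (i : m)
    (j : n) : ((A ⊗ₖ B) *ᵥ v) (i, j) = (A * (B * (Matrix.of fun k l => v (k, l))ᵀ)ᵀ) i j := by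
  simp only [Matrix.mulVec, dotProduct, Matrix.mul_apply, Matrix.transpose_apply,
    Matrix.kroneckerMap_apply, Matrix.of_apply, Fintype.sum_prod_type, Finset.mul_sum]
  exact Finset.sum_congr rfl fun k _ => Finset.sum_congr rfl fun l _ => by ring

lemma l2_opNorm_kronecker_le [Fintype m] [Fintype n] [DecidableEq p] [DecidableEq q]
    (A : Matrix m p ℝ) (B : Matrix n q ℝ) : ‖A ⊗ₖ B‖ ≤ ‖A‖ * ‖B‖ := by
  refine l2_opNorm_le_of_forall_enorm2_le _ (by positivity) fun v => ?_
  set X : Matrix p q ℝ := Matrix.of fun k l => v (k, l)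
  refine (sq_le_sq₀ (enorm2_nonneg _)
    (mul_nonneg (mul_nonneg (norm_nonneg _) (norm_nonneg _)) (enorm2_nonneg _))).1 ?_
  calc enorm2 ((A ⊗ₖ B) *ᵥ v) ^ 2 = ∑ i, ∑ j, (A * (B * Xᵀ)ᵀ) i j ^ 2 := by
        simp only [sq_enorm2, Fintype.sum_prod_type, kronecker_mulVec_apply, X]
    _ ≤ ‖A‖ ^ 2 * ∑ j, ∑ i, (B * Xᵀ) i j ^ 2 := by
        simpa only [Matrix.transpose_apply] using sum_sq_mul_le A (B * Xᵀ)ᵀ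
    _ ≤ ‖A‖ ^ 2 * (‖B‖ ^ 2 * ∑ j, ∑ i, X i j ^ 2) := by
        rw [Finset.sum_comm (f := fun j i => (B * Xᵀ) i j ^ 2)]
        gcongr
        simpa only [Matrix.transpose_apply] using sum_sq_mul_le B Xᵀ
    _ = (‖A‖ * ‖B‖ * enorm2 v) ^ 2 := by
        rw [mul_pow, mul_pow, sq_enorm2, Fintype.sum_prod_type, Finset.sum_comm]
        simp only [X, Matrix.of_apply]
        ring

end Kronecker

section SingularValues

variable {m n : Type*} [Fintype m] [Fintype n]

lemma sval_nonneg (M : Matrix m n ℝ) (j : ℕ) : 0 ≤ sval M j :=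
  Real.sSup_nonneg fun _ hc => hc.1

lemma le_sval [DecidableEq n] (M : Matrix m n ℝ) {j : ℕ} (hj : j ≠ 0) {c : ℝ} (hc : 0 ≤ c)
    {V : Submodule ℝ (n → ℝ)} (hV : Module.finrank ℝ V = j)
    (h : ∀ v ∈ V, c * enorm2 v ≤ enorm2 (M *ᵥ v)) : c ≤ sval M j := by
  refine le_csSup ⟨‖M‖, ?_⟩ ⟨hc, V, hV, h⟩
  rintro c' ⟨-, V', hV', hc'⟩
  have hV'0 : V' ≠ ⊥ := by
    rintro rfl
    exact hj (by simpa using hV'.symm)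
  obtain ⟨x, hxV, hx⟩ := Submodule.exists_mem_ne_zero_of_ne_bot hV'0
  exact le_of_mul_le_mul_right ((hc' x hxV).trans (enorm2_mulVec_le M x)) (enorm2_pos hx)

lemma enorm2_mulVec_le_sval_one [DecidableEq n] (M : Matrix m n ℝ) (v : n → ℝ) :
    enorm2 (M *ᵥ v) ≤ sval M 1 * enorm2 v := by
  rcases eq_or_ne v 0 with rfl | hv
  · simp [enorm2_zero]
  have hpos := enorm2_pos hv
  rw [← div_le_iff₀ hpos]
  refine le_sval M one_ne_zero (div_nonneg (enorm2_nonneg _) hpos.le)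
    (finrank_span_singleton hv) fun w hw => ?_
  obtain ⟨a, rfl⟩ := Submodule.mem_span_singleton.1 hw
  rw [Matrix.mulVec_smul, enorm2_smul, enorm2_smul]
  exact le_of_eq (by field_simp)

lemma l2_opNorm_le_sval_one [DecidableEq n] (M : Matrix m n ℝ) : ‖M‖ ≤ sval M 1 :=
  l2_opNorm_le_of_forall_enorm2_le M (sval_nonneg M 1) (enorm2_mulVec_le_sval_one M)

lemma mul_enorm2_le_mulVec_of_le_sval (M : Matrix m n ℝ) {c : ℝ}
    (h : c ≤ sval M (Fintype.card n)) (v : n → ℝ) : c * enorm2 v ≤ enorm2 (M *ᵥ v) := by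
  rcases eq_or_ne v 0 with rfl | hv
  · simp [enorm2_zero]
  have hpos := enorm2_pos hv
  have hsval : sval M (Fintype.card n) ≤ enorm2 (M *ᵥ v) / enorm2 v := by
    refine Real.sSup_le (fun c' ⟨_, V, hV, hVc⟩ => ?_) (div_nonneg (enorm2_nonneg _) hpos.le)
    have hVtop : V = ⊤ :=
      Submodule.eq_top_of_finrank_eq (by rw [hV, Module.finrank_fintype_fun_eq_card])
    rw [le_div_iff₀ hpos]
    exact hVc v (hVtop ▸ Submodule.mem_top)
  rw [← le_div_iff₀ hpos]
  exact h.trans hsval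

lemma l2_opNorm_inv_le [DecidableEq n] (M : Matrix n n ℝ) (hM : IsUnit M.det) {c : ℝ}
    (hc : 0 < c) (h : ∀ v, c * enorm2 v ≤ enorm2 (M *ᵥ v)) : ‖M⁻¹‖ ≤ c⁻¹ := by
  refine l2_opNorm_le_of_forall_enorm2_le _ (inv_nonneg.2 hc.le) fun v => ?_
  have hv := h (M⁻¹ *ᵥ v)
  rw [Matrix.mulVec_mulVec, Matrix.mul_nonsing_inv M hM, Matrix.one_mulVec] at hv
  rw [inv_mul_eq_div, le_div_iff₀ hc, mul_comm]
  exact hv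

lemma mul_enorm2_le_transpose_mulVec [DecidableEq n] (M : Matrix n n ℝ) {c : ℝ} (hc : 0 < c)
    (h : ∀ v, c * enorm2 v ≤ enorm2 (M *ᵥ v)) (w : n → ℝ) : c * enorm2 w ≤ enorm2 (Mᵀ *ᵥ w) := by
  have hM : IsUnit M.det := by
    refine isUnit_iff_ne_zero.2 fun h0 => ?_
    obtain ⟨v, hv, hMv⟩ := Matrix.exists_mulVec_eq_zero_iff.2 h0
    have := h v
    rw [hMv, enorm2_zero] at this
    nlinarith [enorm2_pos hv]
  have hw : w = (M⁻¹)ᵀ *ᵥ (Mᵀ *ᵥ w) := by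
    rw [Matrix.mulVec_mulVec, ← Matrix.transpose_mul, Matrix.mul_nonsing_inv M hM,
      Matrix.transpose_one, Matrix.one_mulVec]
  calc c * enorm2 w ≤ c * (‖(M⁻¹)ᵀ‖ * enorm2 (Mᵀ *ᵥ w)) := by
        gcongr
        conv_lhs => rw [hw]
        exact enorm2_mulVec_le _ _
    _ ≤ c * (c⁻¹ * enorm2 (Mᵀ *ᵥ w)) := by
        rw [l2_opNorm_transpose]
        gcongr
        · exact enorm2_nonneg _
        · exact l2_opNorm_inv_le M hM hc h
    _ = enorm2 (Mᵀ *ᵥ w) := by field_simp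

end SingularValues

section SinTheta

variable {m : Type*} [Fintype m] [DecidableEq m]

lemma OrthoCols.transpose_mul_one_sub_mul {r s : ℕ} {A : Matrix m (Fin r) ℝ}
    {B : Matrix m (Fin s) ℝ} (hA : OrthoCols A) (hB : OrthoCols B) :
    ((1 - B * Bᵀ) * A)ᵀ * ((1 - B * Bᵀ) * A) = 1 - (Bᵀ * A)ᵀ * (Bᵀ * A) := by
  have hP := hB.isOrthProj.one_sub
  rw [Matrix.transpose_mul, hP.1, Matrix.mul_assoc, ← Matrix.mul_assoc (1 - B * Bᵀ), hP.2,
    Matrix.transpose_mul, Matrix.transpose_transpose]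
  simp only [Matrix.mul_sub, Matrix.sub_mul, Matrix.one_mul, Matrix.mul_assoc]
  rw [hA]

lemma sq_enorm2_one_sub_mul_mulVec {r s : ℕ} {A : Matrix m (Fin r) ℝ}
    {B : Matrix m (Fin s) ℝ} (hA : OrthoCols A) (hB : OrthoCols B) (x : Fin r → ℝ) :
    enorm2 (((1 - B * Bᵀ) * A) *ᵥ x) ^ 2 = enorm2 x ^ 2 - enorm2 ((Bᵀ * A) *ᵥ x) ^ 2 := by
  rw [enorm2_sq_mulVec, hA.transpose_mul_one_sub_mul hB, Matrix.sub_mulVec, dotProduct_sub,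
    Matrix.one_mulVec, ← sq_enorm2_eq_dotProduct, ← enorm2_sq_mulVec]

/-- With `M = Bᵀ A` one has `‖(1 - B Bᵀ) A x‖² = ‖x‖² - ‖M x‖²` and
`‖(1 - A Aᵀ) B y‖² = ‖y‖² - ‖Mᵀ y‖²`, so the claim reduces to the fact that a lower bound
`c ‖x‖ ≤ ‖M x‖` of the square matrix `M` is also one of `Mᵀ`. -/
lemma l2_opNorm_one_sub_mul_le_symm {r : ℕ} {A B : Matrix m (Fin r) ℝ} (hA : OrthoCols A)
    (hB : OrthoCols B) : ‖(1 - A * Aᵀ) * B‖ ≤ ‖(1 - B * Bᵀ) * A‖ := by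
  set s := ‖(1 - B * Bᵀ) * A‖
  by_cases hs : 1 ≤ s
  · calc ‖(1 - A * Aᵀ) * B‖ ≤ ‖1 - A * Aᵀ‖ * ‖B‖ := Matrix.l2_opNorm_mul _ _
      _ ≤ 1 * 1 := by
        gcongr
        exacts [hA.isOrthProj.one_sub.l2_opNorm_le_one, hB.l2_opNorm_le_one]
      _ ≤ s := by linarith
  rw [not_le] at hs
  have hs0 : 0 ≤ s := norm_nonneg _
  set c := Real.sqrt (1 - s ^ 2)
  have hc : 0 < c := Real.sqrt_pos.2 (by nlinarith)
  have hcsq : c ^ 2 = 1 - s ^ 2 := Real.sq_sqrt (by nlinarith)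
  have hlow : ∀ x, c * enorm2 x ≤ enorm2 ((Bᵀ * A) *ᵥ x) := fun x => by
    have h1 := pow_le_pow_left₀ (enorm2_nonneg _) (enorm2_mulVec_le ((1 - B * Bᵀ) * A) x) 2
    rw [sq_enorm2_one_sub_mul_mulVec hA hB] at h1
    refine (sq_le_sq₀ (mul_nonneg hc.le (enorm2_nonneg _)) (enorm2_nonneg _)).1 ?_
    rw [mul_pow, hcsq]
    nlinarith
  refine l2_opNorm_le_of_forall_enorm2_le _ hs0 fun y => ?_
  have h2 := mul_enorm2_le_transpose_mulVec _ hc hlow y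
  rw [Matrix.transpose_mul, Matrix.transpose_transpose] at h2
  have h3 := pow_le_pow_left₀ (mul_nonneg hc.le (enorm2_nonneg _)) h2 2
  refine (sq_le_sq₀ (enorm2_nonneg _) (mul_nonneg hs0 (enorm2_nonneg _))).1 ?_
  rw [sq_enorm2_one_sub_mul_mulVec hB hA, mul_pow]
  rw [mul_pow, hcsq] at h3
  nlinarith

lemma l2_opNorm_sub_orthProj_le {r : ℕ} {A B : Matrix m (Fin r) ℝ} (hA : OrthoCols A)
    (hB : OrthoCols B) : ‖A * Aᵀ - B * Bᵀ‖ ≤ 2 * ‖(1 - B * Bᵀ) * A‖ := by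
  have hsplit : A * Aᵀ - B * Bᵀ = (1 - B * Bᵀ) * A * Aᵀ - ((1 - A * Aᵀ) * B * Bᵀ)ᵀ := by
    simp only [Matrix.transpose_mul, Matrix.transpose_sub,
      Matrix.transpose_transpose, Matrix.sub_mul, Matrix.one_mul, Matrix.mul_assoc]
    abel
  rw [hsplit]
  calc _ ≤ ‖(1 - B * Bᵀ) * A * Aᵀ‖ + ‖(1 - A * Aᵀ) * B * Bᵀ‖ := by
        rw [← l2_opNorm_transpose ((1 - A * Aᵀ) * B * Bᵀ)]
        exact norm_sub_le _ _
    _ ≤ ‖(1 - B * Bᵀ) * A‖ * ‖Aᵀ‖ + ‖(1 - A * Aᵀ) * B‖ * ‖Bᵀ‖ :=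
        add_le_add (Matrix.l2_opNorm_mul _ _) (Matrix.l2_opNorm_mul _ _)
    _ ≤ ‖(1 - B * Bᵀ) * A‖ * 1 + ‖(1 - B * Bᵀ) * A‖ * 1 := by
        gcongr
        exacts [hA.l2_opNorm_transpose_le_one, l2_opNorm_one_sub_mul_le_symm hA hB,
          hB.l2_opNorm_transpose_le_one]
    _ = 2 * ‖(1 - B * Bᵀ) * A‖ := by ring

end SinTheta

lemma exists_isOrthProj_rank_eq_mul_eq {m k : Type*} [Fintype m] [DecidableEq m] [Fintype k]
    [DecidableEq k] (N : Matrix m k ℝ) :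
    ∃ W : Matrix m m ℝ, IsOrthProj W ∧ W.rank = N.rank ∧ W * N = N := by
  set K := LinearMap.range (Matrix.toEuclideanLin N)
  obtain ⟨W, hWK⟩ : ∃ W, Matrix.toEuclideanCLM (𝕜 := ℝ) (n := m) W = K.starProjection :=
    ⟨(Matrix.toEuclideanCLM (𝕜 := ℝ) (n := m)).symm K.starProjection, by simp⟩
  have hinj : Function.Injective (Matrix.toEuclideanCLM (𝕜 := ℝ) (n := m)) :=
    Matrix.toEuclideanCLM.injective
  refine ⟨W, ⟨?_, ?_⟩, ?_, ?_⟩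
  · rw [← Matrix.conjTranspose_eq_transpose_of_trivial, ← Matrix.star_eq_conjTranspose]
    apply hinj
    rw [map_star, hWK, (isSelfAdjoint_starProjection K).star_eq]
  · apply hinj
    rw [map_mul, hWK, K.isIdempotentElem_starProjection.eq]
  · rw [W.rank_eq_finrank_range_toLin (EuclideanSpace.basisFun m ℝ).toBasis
        (EuclideanSpace.basisFun m ℝ).toBasis,
      N.rank_eq_finrank_range_toLin (EuclideanSpace.basisFun m ℝ).toBasis
        (EuclideanSpace.basisFun k ℝ).toBasis,
      ← Matrix.toEuclideanLin_eq_toLin_orthonormal, ← Matrix.toEuclideanLin_eq_toLin_orthonormal,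
      ← Matrix.coe_toEuclideanCLM_eq_toEuclideanLin, hWK]
    exact congrArg (fun S : Submodule ℝ (EuclideanSpace ℝ m) => Module.finrank ℝ S)
      K.range_starProjection
  · refine Matrix.ext_iff_mulVec.2 fun x => ?_
    have hx : WithLp.toLp 2 (N *ᵥ x) ∈ K := ⟨WithLp.toLp 2 x, rfl⟩
    rw [← Matrix.mulVec_mulVec]
    have := congrArg WithLp.ofLp (Submodule.starProjection_eq_self_iff.2 hx)
    rwa [← hWK] at this

lemma exists_isOrthProj_rank_le_mul_sub_eq {m : Type*} [Fintype m] [DecidableEq m] {r : ℕ}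
    (A B : Matrix m (Fin r) ℝ) :
    ∃ W : Matrix m m ℝ, IsOrthProj W ∧ W.rank ≤ 2 * r ∧
      W * (A * Aᵀ - B * Bᵀ) = A * Aᵀ - B * Bᵀ := by
  obtain ⟨W, hW, hWr, hWN⟩ := exists_isOrthProj_rank_eq_mul_eq (Matrix.fromCols A B)
  rw [Matrix.mul_fromCols, Matrix.fromCols_ext_iff] at hWN
  refine ⟨W, hW, ?_, ?_⟩
  · calc W.rank = (Matrix.fromCols A B).rank := hWr
      _ ≤ Fintype.card (Fin r ⊕ Fin r) := Matrix.rank_le_card_width _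
      _ = 2 * r := by rw [Fintype.card_sum, Fintype.card_fin, two_mul]
  · rw [Matrix.mul_sub, ← Matrix.mul_assoc, ← Matrix.mul_assoc, hWN.1, hWN.2]

lemma kronecker_sub_kronecker {m n p q : Type*} (A A' : Matrix m n ℝ) (B B' : Matrix p q ℝ) :
    A ⊗ₖ B - A' ⊗ₖ B' = (A - A') ⊗ₖ B + A' ⊗ₖ (B - B') := by
  ext ⟨i, j⟩ ⟨k, l⟩
  simp only [Matrix.sub_apply, Matrix.add_apply, Matrix.kroneckerMap_apply]
  ring

section Tau

variable {p₁ p₂ p₃ : ℕ} (r₂ r₃ : ℕ) (Z : Matrix (Fin p₁) (Fin p₂ × Fin p₃) ℝ)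

lemma l2_opNorm_mul_kronecker_le_tauP {P : Matrix (Fin p₂) (Fin p₂) ℝ}
    {Q : Matrix (Fin p₃) (Fin p₃) ℝ} (hP : IsOrthProj P) (hQ : IsOrthProj Q)
    (hrP : P.rank ≤ 2 * r₂) (hrQ : Q.rank ≤ 2 * r₃) : ‖Z * (P ⊗ₖ Q)‖ ≤ tauP r₂ r₃ Z := by
  refine le_csSup ⟨‖Z‖, ?_⟩ ⟨P, Q, hP, hQ, hrP, hrQ, (spec_eq_l2_opNorm _).symm⟩
  rintro c ⟨P', Q', hP', hQ', -, -, rfl⟩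
  rw [spec_eq_l2_opNorm]
  calc ‖Z * (P' ⊗ₖ Q')‖ ≤ ‖Z‖ * ‖P' ⊗ₖ Q'‖ := Matrix.l2_opNorm_mul _ _
    _ ≤ ‖Z‖ * (1 * 1) := by
        gcongr
        exact (l2_opNorm_kronecker_le P' Q').trans
          (mul_le_mul hP'.l2_opNorm_le_one hQ'.l2_opNorm_le_one (norm_nonneg _) zero_le_one)
    _ = ‖Z‖ := by ring

lemma tauP_nonneg : 0 ≤ tauP r₂ r₃ Z := by
  have h0 (n : ℕ) : IsOrthProj (0 : Matrix (Fin n) (Fin n) ℝ) := ⟨by simp, by simp⟩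
  simpa using l2_opNorm_mul_kronecker_le_tauP r₂ r₃ Z (h0 p₂) (h0 p₃) (by simp) (by simp)

variable {r₂ r₃} in
lemma l2_opNorm_mul_kronecker_le_tauP_mul {L₂ G : Matrix (Fin p₂) (Fin p₂) ℝ}
    {L₃ H : Matrix (Fin p₃) (Fin p₃) ℝ} (hL₂ : IsOrthProj L₂) (hL₃ : IsOrthProj L₃)
    (hr₂ : L₂.rank ≤ 2 * r₂) (hr₃ : L₃.rank ≤ 2 * r₃) (hG : L₂ * G = G) (hH : L₃ * H = H) :
    ‖Z * (G ⊗ₖ H)‖ ≤ tauP r₂ r₃ Z * (‖G‖ * ‖H‖) := by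
  have hZ : Z * (G ⊗ₖ H) = Z * (L₂ ⊗ₖ L₃) * (G ⊗ₖ H) := by
    rw [Matrix.mul_assoc, ← Matrix.mul_kronecker_mul, hG, hH]
  rw [hZ]
  exact (Matrix.l2_opNorm_mul _ _).trans (mul_le_mul
    (l2_opNorm_mul_kronecker_le_tauP r₂ r₃ Z hL₂ hL₃ hr₂ hr₃) (l2_opNorm_kronecker_le G H)
    (norm_nonneg _) (tauP_nonneg r₂ r₃ Z))

variable {r₂ r₃} in
lemma l2_opNorm_mul_sub_kronecker_le {A₂ B₂ : Matrix (Fin p₂) (Fin r₂) ℝ}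
    {A₃ B₃ : Matrix (Fin p₃) (Fin r₃) ℝ} (hA₂ : OrthoCols A₂) (hB₂ : OrthoCols B₂)
    (hA₃ : OrthoCols A₃) (hB₃ : OrthoCols B₃) :
    ‖Z * ((A₂ * A₂ᵀ) ⊗ₖ (A₃ * A₃ᵀ) - (B₂ * B₂ᵀ) ⊗ₖ (B₃ * B₃ᵀ))‖ ≤
      2 * tauP r₂ r₃ Z * (‖(1 - B₂ * B₂ᵀ) * A₂‖ + ‖(1 - B₃ * B₃ᵀ) * A₃‖) := by
  obtain ⟨W₂, hW₂, hW₂r, hW₂fix⟩ := exists_isOrthProj_rank_le_mul_sub_eq A₂ B₂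
  obtain ⟨W₃, hW₃, hW₃r, hW₃fix⟩ := exists_isOrthProj_rank_le_mul_sub_eq A₃ B₃
  have hτ := tauP_nonneg r₂ r₃ Z
  rw [kronecker_sub_kronecker, Matrix.mul_add]
  calc _ ≤ ‖Z * ((A₂ * A₂ᵀ - B₂ * B₂ᵀ) ⊗ₖ (A₃ * A₃ᵀ))‖
        + ‖Z * ((B₂ * B₂ᵀ) ⊗ₖ (A₃ * A₃ᵀ - B₃ * B₃ᵀ))‖ := norm_add_le _ _
    _ ≤ tauP r₂ r₃ Z * (‖A₂ * A₂ᵀ - B₂ * B₂ᵀ‖ * ‖A₃ * A₃ᵀ‖)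
        + tauP r₂ r₃ Z * (‖B₂ * B₂ᵀ‖ * ‖A₃ * A₃ᵀ - B₃ * B₃ᵀ‖) := by
      gcongr
      · exact l2_opNorm_mul_kronecker_le_tauP_mul Z hW₂ hA₃.isOrthProj hW₂r
          ((rank_mul_transpose_le A₃).trans (by omega)) hW₂fix hA₃.isOrthProj.2
      · exact l2_opNorm_mul_kronecker_le_tauP_mul Z hB₂.isOrthProj hW₃
          ((rank_mul_transpose_le B₂).trans (by omega)) hW₃r hB₂.isOrthProj.2 hW₃fix
    _ ≤ tauP r₂ r₃ Z * (2 * ‖(1 - B₂ * B₂ᵀ) * A₂‖ * 1)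
        + tauP r₂ r₃ Z * (1 * (2 * ‖(1 - B₃ * B₃ᵀ) * A₃‖)) := by
      gcongr
      exacts [l2_opNorm_sub_orthProj_le hA₂ hB₂, hA₃.isOrthProj.l2_opNorm_le_one,
        hB₂.isOrthProj.l2_opNorm_le_one, l2_opNorm_sub_orthProj_le hA₃ hB₃]
    _ = _ := by ring

variable {r₂ r₃} in
lemma l2_opNorm_mul_kronecker_mul_sub_le {k : Type*} [Fintype k] [DecidableEq k]
    {V : Matrix (Fin p₂ × Fin p₃) k ℝ} (hV : ‖V‖ ≤ 1) {A₂ B₂ : Matrix (Fin p₂) (Fin r₂) ℝ}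
    {A₃ B₃ : Matrix (Fin p₃) (Fin r₃) ℝ} (hA₂ : OrthoCols A₂) (hB₂ : OrthoCols B₂)
    (hA₃ : OrthoCols A₃) (hB₃ : OrthoCols B₃) :
    ‖Z * ((A₂ * A₂ᵀ) ⊗ₖ (A₃ * A₃ᵀ)) * V - Z * ((B₂ * B₂ᵀ) ⊗ₖ (B₃ * B₃ᵀ)) * V‖ ≤
      2 * tauP r₂ r₃ Z * (‖(1 - B₂ * B₂ᵀ) * A₂‖ + ‖(1 - B₃ * B₃ᵀ) * A₃‖) := by
  have h := l2_opNorm_mul_sub_kronecker_le Z hA₂ hB₂ hA₃ hB₃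
  rw [← Matrix.sub_mul, ← Matrix.mul_sub]
  calc _ ≤ _ * ‖V‖ := Matrix.l2_opNorm_mul _ _
    _ ≤ _ * 1 := mul_le_mul h hV (norm_nonneg _) ((norm_nonneg _).trans h)
    _ = _ := mul_one _

variable {r₂ r₃} in
lemma enorm2_row_mul_kronecker_mul_le {k : Type*} [Fintype k] [DecidableEq k]
    {V : Matrix (Fin p₂ × Fin p₃) k ℝ} (hV : ‖V‖ ≤ 1) {A₂ B₂ : Matrix (Fin p₂) (Fin r₂) ℝ}
    {A₃ B₃ : Matrix (Fin p₃) (Fin r₃) ℝ} (hA₂ : OrthoCols A₂) (hB₂ : OrthoCols B₂)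
    (hA₃ : OrthoCols A₃) (hB₃ : OrthoCols B₃) (i : Fin p₁) :
    enorm2 ((Z * ((A₂ * A₂ᵀ) ⊗ₖ (A₃ * A₃ᵀ)) * V) i) ≤
      enorm2 ((Z * ((B₂ * B₂ᵀ) ⊗ₖ (B₃ * B₃ᵀ)) * V) i) +
        2 * tauP r₂ r₃ Z * (‖(1 - B₂ * B₂ᵀ) * A₂‖ + ‖(1 - B₃ * B₃ᵀ) * A₃‖) :=
  (enorm2_row_le_add_l2_opNorm_sub _ _ i).trans
    (add_le_add le_rfl (l2_opNorm_mul_kronecker_mul_sub_le Z hV hA₂ hB₂ hA₃ hB₃))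

variable {r₂ r₃} in
lemma l2_opNorm_mul_mul_kronecker_mul_le {k l : Type*} [Fintype k] [DecidableEq k] [Fintype l]
    {X : Matrix l (Fin p₁) ℝ} (hX : ‖X‖ ≤ 1) {V : Matrix (Fin p₂ × Fin p₃) k ℝ} (hV : ‖V‖ ≤ 1)
    {A₂ B₂ : Matrix (Fin p₂) (Fin r₂) ℝ} {A₃ B₃ : Matrix (Fin p₃) (Fin r₃) ℝ}
    (hA₂ : OrthoCols A₂) (hB₂ : OrthoCols B₂) (hA₃ : OrthoCols A₃) (hB₃ : OrthoCols B₃)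
    (hBV : (B₂ * B₂ᵀ) ⊗ₖ (B₃ * B₃ᵀ) * V = V) :
    ‖X * (Z * ((A₂ * A₂ᵀ) ⊗ₖ (A₃ * A₃ᵀ)) * V)‖ ≤
      ‖X * Z * V‖ + 2 * tauP r₂ r₃ Z * (‖(1 - B₂ * B₂ᵀ) * A₂‖ + ‖(1 - B₃ * B₃ᵀ) * A₃‖) := by
  have hXZV : X * (Z * ((B₂ * B₂ᵀ) ⊗ₖ (B₃ * B₃ᵀ)) * V) = X * Z * V := by
    rw [Matrix.mul_assoc Z, hBV, Matrix.mul_assoc]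
  have h := l2_opNorm_mul_le_add_l2_opNorm_sub hX (Z * ((A₂ * A₂ᵀ) ⊗ₖ (A₃ * A₃ᵀ)) * V)
    (Z * ((B₂ * B₂ᵀ) ⊗ₖ (B₃ * B₃ᵀ)) * V)
  rw [hXZV] at h
  exact h.trans (add_le_add le_rfl (l2_opNorm_mul_kronecker_mul_sub_le Z hV hA₂ hB₂ hA₃ hB₃))

end Tau

lemma IsCompactSVD.l2_opNorm_le {m n : Type*} [Fintype m] [Fintype n] [DecidableEq m]
    [DecidableEq n] {r : ℕ} {M : Matrix m n ℝ} {U : Matrix m (Fin r) ℝ}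
    {L : Matrix (Fin r) (Fin r) ℝ} {V : Matrix n (Fin r) ℝ} (h : IsCompactSVD M U L V) :
    ‖L‖ ≤ ‖M‖ := by
  obtain ⟨hU, hV, -, -, rfl⟩ := h
  have hL : Uᵀ * (U * L * Vᵀ) * V = L := by
    rw [← Matrix.mul_assoc, ← Matrix.mul_assoc, hU, Matrix.one_mul, Matrix.mul_assoc, hV,
      Matrix.mul_one]
  calc ‖L‖ = ‖Uᵀ * (U * L * Vᵀ) * V‖ := by rw [hL]
    _ ≤ ‖U * L * Vᵀ‖ :=
        l2_opNorm_mul_mul_le_of_le_one hU.l2_opNorm_transpose_le_one hV.l2_opNorm_le_one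

lemma l2_opNorm_inv_le_of_le_sval {r : ℕ} (M : Matrix (Fin r) (Fin r) ℝ) (hM : IsUnit M.det)
    {c : ℝ} (hc : 0 < c) (h : c ≤ sval M r) : ‖M⁻¹‖ ≤ c⁻¹ :=
  l2_opNorm_inv_le M hM hc (mul_enorm2_le_mulVec_of_le_sval M (by rwa [Fintype.card_fin]))

lemma IsCompactSVD.l2_opNorm_transpose_mul_mul_inv_mul_inv_le {m n : Type*} [Fintype m]
    [Fintype n] [DecidableEq m] [DecidableEq n] {r : ℕ} {M : Matrix m n ℝ}
    {U Û : Matrix m (Fin r) ℝ} {L Λ : Matrix (Fin r) (Fin r) ℝ} {V : Matrix n (Fin r) ℝ}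
    (hM : IsCompactSVD M U L V) (hÛ : OrthoCols Û) (hΛ : IsUnit Λ.det) {lam kappa : ℝ}
    (hlam : 0 < lam) (hkappa : sval M 1 ≤ kappa * lam) (hΛs : lam / 2 ≤ sval Λ r) :
    ‖Lᵀ * (Uᵀ * Û) * (Λ⁻¹ * Λ⁻¹)‖ ≤ 4 * kappa / lam := by
  have hL : ‖Lᵀ‖ ≤ kappa * lam := by
    rw [l2_opNorm_transpose]
    exact hM.l2_opNorm_le.trans ((l2_opNorm_le_sval_one M).trans hkappa)
  have hUÛ : ‖Uᵀ * Û‖ ≤ 1 := (Matrix.l2_opNorm_mul _ _).trans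
    (mul_le_one₀ hM.1.l2_opNorm_transpose_le_one (norm_nonneg _) hÛ.l2_opNorm_le_one)
  have hΛinv : ‖Λ⁻¹‖ ≤ 2 / lam := by
    simpa using l2_opNorm_inv_le_of_le_sval Λ hΛ (half_pos hlam) hΛs
  have hκlam : 0 ≤ kappa * lam := (norm_nonneg _).trans hL
  calc _ ≤ ‖Lᵀ‖ * ‖Uᵀ * Û‖ * (‖Λ⁻¹‖ * ‖Λ⁻¹‖) := (Matrix.l2_opNorm_mul _ _).trans
        (mul_le_mul (Matrix.l2_opNorm_mul _ _) (Matrix.l2_opNorm_mul _ _) (norm_nonneg _)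
          (by positivity))
    _ ≤ (kappa * lam) * 1 * (2 / lam * (2 / lam)) :=
        mul_le_mul (mul_le_mul hL hUÛ (norm_nonneg _) hκlam)
          (mul_le_mul hΛinv hΛinv (norm_nonneg _) (by positivity)) (by positivity)
          (mul_nonneg hκlam zero_le_one)
    _ = 4 * kappa / lam := by field_simp; ring

lemma enorm2_row_one_sub_mul_mul_le {m k l : Type*} [Fintype m] [DecidableEq m] [Fintype k]
    [DecidableEq k] [Fintype l] [DecidableEq l] {r : ℕ} (U : Matrix m (Fin r) ℝ)
    (G : Matrix m k ℝ) (B : Matrix k l ℝ) (i : m) :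
    enorm2 (((1 - U * Uᵀ) * G * B : Matrix m l ℝ) i) ≤
      (enorm2 (G i) + twoInf U * ‖Uᵀ * G‖) * ‖B‖ := by
  refine (enorm2_row_mul_le _ B i).trans (mul_le_mul_of_nonneg_right ?_ (norm_nonneg _))
  rw [Matrix.sub_mul, Matrix.one_mul, Matrix.mul_assoc]
  calc _ ≤ enorm2 (G i) + enorm2 ((U * (Uᵀ * G)) i) := enorm2_sub_le _ _
    _ ≤ enorm2 (G i) + enorm2 (U i) * ‖Uᵀ * G‖ := by gcongr; exact enorm2_row_mul_le _ _ i
    _ ≤ enorm2 (G i) + twoInf U * ‖Uᵀ * G‖ := by gcongr; exact enorm2_row_le_twoInf U i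

theorem stmt13_general {p₁ p₂ p₃ r₁ r₂ r₃ : ℕ}
    (lam : ℝ) (hlam : 0 < lam)
    (T1 : Matrix (Fin p₁) (Fin p₂ × Fin p₃) ℝ)
    (U1 : Matrix (Fin p₁) (Fin r₁) ℝ) (L1 : Matrix (Fin r₁) (Fin r₁) ℝ)
    (V1 : Matrix (Fin p₂ × Fin p₃) (Fin r₁) ℝ)
    (hSVD : IsCompactSVD T1 U1 L1 V1)
    (U2 : Matrix (Fin p₂) (Fin r₂) ℝ) (U3 : Matrix (Fin p₃) (Fin r₃) ℝ)
    (hU2 : OrthoCols U2) (hU3 : OrthoCols U3)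
    (hV : ((U2 * U2ᵀ) ⊗ₖ (U3 * U3ᵀ)) * V1 = V1)
    (Z1 : Matrix (Fin p₁) (Fin p₂ × Fin p₃) ℝ)
    (Uh2 : Matrix (Fin p₂) (Fin r₂) ℝ) (Uh3 : Matrix (Fin p₃) (Fin r₃) ℝ)
    (Ut2 : Matrix (Fin p₂) (Fin r₂) ℝ) (Ut3 : Matrix (Fin p₃) (Fin r₃) ℝ)
    (hUh2 : OrthoCols Uh2) (hUh3 : OrthoCols Uh3)
    (hUt2 : OrthoCols Ut2) (hUt3 : OrthoCols Ut3)
    (kappa : ℝ) (hkappa : sval T1 1 ≤ kappa * lam)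
    (Uh1 : Matrix (Fin p₁) (Fin r₁) ℝ) (hUh1 : OrthoCols Uh1)
    (Lh : Matrix (Fin r₁) (Fin r₁) ℝ) (hLh : IsUnit Lh.det)
    (hLhs : lam / 2 ≤ sval Lh r₁)
    (m : Fin p₁) :
    enorm2 ((((1 - U1 * U1ᵀ) * Z1 * ((Uh2 * Uh2ᵀ) ⊗ₖ (Uh3 * Uh3ᵀ)) * T1ᵀ * Uh1 *
        (Lh⁻¹ * Lh⁻¹) : Matrix (Fin p₁) (Fin r₁) ℝ)) m) ≤
      (8 * kappa / lam) * twoInf U1 *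
          (tauP r₂ r₃ Z1 * (sinTheta U2 Uh2 + sinTheta U3 Uh3) + spec (U1ᵀ * Z1 * V1)) +
        (8 * kappa / lam) * (tauP r₂ r₃ Z1 * (sinTheta Ut2 Uh2 + sinTheta Ut3 Uh3)) +
        (4 * kappa / lam) * enorm2 ((Z1 * ((Ut2 * Ut2ᵀ) ⊗ₖ (Ut3 * Ut3ᵀ)) * V1 : Matrix (Fin p₁) (Fin r₁) ℝ) m) := by
  obtain ⟨hU1, hV1, -, -, hT1⟩ := id hSVD
  simp only [sinTheta, spec_eq_l2_opNorm]
  set G := Z1 * ((Uh2 * Uh2ᵀ) ⊗ₖ (Uh3 * Uh3ᵀ)) * V1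
  set B := L1ᵀ * (U1ᵀ * Uh1) * (Lh⁻¹ * Lh⁻¹)
  have hB : ‖B‖ ≤ 4 * kappa / lam :=
    hSVD.l2_opNorm_transpose_mul_mul_inv_mul_inv_le hUh1 hLh hlam hkappa hLhs
  have ht : 0 ≤ twoInf U1 := (enorm2_nonneg _).trans (enorm2_row_le_twoInf U1 m)
  have hG := enorm2_row_mul_kronecker_mul_le Z1 hV1.l2_opNorm_le_one hUh2 hUt2 hUh3 hUt3 m
  have hC := l2_opNorm_mul_mul_kronecker_mul_le Z1 hU1.l2_opNorm_transpose_le_one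
    hV1.l2_opNorm_le_one hUh2 hU2 hUh3 hU3 hV
  have hGC := add_le_add hG (mul_le_mul_of_nonneg_left hC ht)
  have hfac : (1 - U1 * U1ᵀ) * Z1 * ((Uh2 * Uh2ᵀ) ⊗ₖ (Uh3 * Uh3ᵀ)) * T1ᵀ * Uh1 * (Lh⁻¹ * Lh⁻¹) =
      (1 - U1 * U1ᵀ) * G * B := by
    rw [hT1]
    simp only [G, B, Matrix.transpose_mul, Matrix.transpose_transpose, Matrix.mul_assoc]
  rw [hfac]
  calc _ ≤ (enorm2 (G m) + twoInf U1 * ‖U1ᵀ * G‖) * ‖B‖ :=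
        enorm2_row_one_sub_mul_mul_le U1 G B m
    _ ≤ _ * (4 * kappa / lam) := mul_le_mul hGC hB (norm_nonneg _)
        ((add_nonneg (enorm2_nonneg _) (mul_nonneg ht (norm_nonneg _))).trans hGC)
    _ ≤ _ := by
        linear_combination mul_nonneg ((norm_nonneg _).trans hB)
          (mul_nonneg ht (norm_nonneg (U1ᵀ * Z1 * V1)))

/-- deterministic bound for the linear term. -/
theorem stmt13 {p₁ p₂ p₃ r₁ r₂ r₃ : ℕ}
    (lam : ℝ) (hlam : 0 < lam)
    (T1 : Matrix (Fin p₁) (Fin p₂ × Fin p₃) ℝ)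
    (U1 : Matrix (Fin p₁) (Fin r₁) ℝ) (L1 : Matrix (Fin r₁) (Fin r₁) ℝ)
    (V1 : Matrix (Fin p₂ × Fin p₃) (Fin r₁) ℝ)
    (hSVD : IsCompactSVD T1 U1 L1 V1) (hsr : lam ≤ sval T1 r₁)
    (U2 : Matrix (Fin p₂) (Fin r₂) ℝ) (U3 : Matrix (Fin p₃) (Fin r₃) ℝ)
    (hU2 : OrthoCols U2) (hU3 : OrthoCols U3)
    (hV : ((U2 * U2ᵀ) ⊗ₖ (U3 * U3ᵀ)) * V1 = V1)
    (Z1 : Matrix (Fin p₁) (Fin p₂ × Fin p₃) ℝ)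
    (Uh2 : Matrix (Fin p₂) (Fin r₂) ℝ) (Uh3 : Matrix (Fin p₃) (Fin r₃) ℝ)
    (Ut2 : Matrix (Fin p₂) (Fin r₂) ℝ) (Ut3 : Matrix (Fin p₃) (Fin r₃) ℝ)
    (hUh2 : OrthoCols Uh2) (hUh3 : OrthoCols Uh3)
    (hUt2 : OrthoCols Ut2) (hUt3 : OrthoCols Ut3)
    (kappa : ℝ) (hkappa : sval T1 1 ≤ kappa * lam)
    (Uh1 : Matrix (Fin p₁) (Fin r₁) ℝ) (hUh1 : OrthoCols Uh1)
    (Lh : Matrix (Fin r₁) (Fin r₁) ℝ) (hLh : IsUnit Lh.det)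
    (hLhs : lam / 2 ≤ sval Lh r₁)
    (m : Fin p₁) :
    enorm2 ((((1 - U1 * U1ᵀ) * Z1 * ((Uh2 * Uh2ᵀ) ⊗ₖ (Uh3 * Uh3ᵀ)) * T1ᵀ * Uh1 *
        (Lh⁻¹ * Lh⁻¹) : Matrix (Fin p₁) (Fin r₁) ℝ)) m) ≤
      (8 * kappa / lam) * twoInf U1 *
          (tauP r₂ r₃ Z1 * (sinTheta U2 Uh2 + sinTheta U3 Uh3) + spec (U1ᵀ * Z1 * V1)) +
        (8 * kappa / lam) * (tauP r₂ r₃ Z1 * (sinTheta Ut2 Uh2 + sinTheta Ut3 Uh3)) +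
        (4 * kappa / lam) * enorm2 ((Z1 * ((Ut2 * Ut2ᵀ) ⊗ₖ (Ut3 * Ut3ᵀ)) * V1 : Matrix (Fin p₁) (Fin r₁) ℝ) m) :=
  stmt13_general lam hlam T1 U1 L1 V1 hSVD U2 U3 hU2 hU3 hV Z1 Uh2 Uh3 Ut2 Ut3 hUh2 hUh3 hUt2 hUt3
    kappa hkappa Uh1 hUh1 Lh hLh hLhs m
end
end
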